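/- (Kronecker's theorem) If P is a monic irreducible integer polynomial with P(0) ≠ 0 and all of its complex roots lie on or inside the unit circle, then every root of P is a root of unity. -/

import Mathlib

/-! The Mahler measure `|lc P| · ∏ max 1 |θᵢ|` of `P` equals `1`. The powers of a nonzero root of an
integer polynomial of Mahler measure `1` are roots of integer polynomials of bounded degree and
Mahler measure `1`, a finite set (Northcott), so two of these powers coincide. -/

open Polynomial

theorem Polynomial.Monic.mahlerMeasure_eq_one_of_forall_norm_root_le_one {p : ℂ[X]}
    (hp : p.Monic) (h : ∀ z ∈ p.roots, ‖z‖ ≤ 1) : p.mahlerMeasure = 1 := by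
  rw [mahlerMeasure_eq_leadingCoeff_mul_prod_roots, hp.leadingCoeff, norm_one, one_mul]
  exact Multiset.prod_eq_one fun x hx => by
    obtain ⟨z, hz, rfl⟩ := Multiset.mem_map.mp hx
    exact max_eq_left (h z hz)

theorem kronecker_general (P : Polynomial ℤ) (hP : P.Monic)
    (h0 : P.eval 0 ≠ 0)
    (h : ∀ θ ∈ (P.map (Int.castRingHom ℂ)).roots, ‖θ‖ ≤ 1) :
    ∀ θ ∈ (P.map (Int.castRingHom ℂ)).roots, ∃ m : ℕ, 1 ≤ m ∧ θ ^ m = 1 := by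
  intro θ hθ
  have hθ₀ : θ ≠ 0 := by
    rintro rfl
    have hroot := isRoot_of_mem_roots hθ
    rw [IsRoot, eval_zero_map, eq_intCast, Int.cast_eq_zero] at hroot
    exact h0 hroot
  exact pow_eq_one_of_mahlerMeasure_eq_one
    ((hP.map _).mahlerMeasure_eq_one_of_forall_norm_root_le_one h) hθ₀ hθ

theorem kronecker (P : Polynomial ℤ) (hP : P.Monic) (hirr : Irreducible P)
    (h0 : P.eval 0 ≠ 0)
    (h : ∀ θ ∈ (P.map (Int.castRingHom ℂ)).roots, ‖θ‖ ≤ 1) :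
    ∀ θ ∈ (P.map (Int.castRingHom ℂ)).roots, ∃ m : ℕ, 1 ≤ m ∧ θ ^ m = 1 :=
  kronecker_general P hP h0 h
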